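/- arXiv:2406.16278 — 2 statements merged into one kernel-verified Lean document; each statement's English description precedes it below -/
import Mathlib

section
/- For every (z,w) ∈ ℝ^{2n}×ℝ^m one has Σ_{j=1}^{2n+m+1} ω_j(z,w)² = 1. -/
open MeasureTheory Real Matrix

noncomputable section

/-- Underlying space of the H-type group `G = ℝ^{2n} × ℝ^m`. -/
abbrev HG (n m : ℕ) : Type := (Fin (2*n) → ℝ) × (Fin m → ℝ)

/-- Squared Euclidean norm. -/
def zsq {k : ℕ} (z : Fin k → ℝ) : ℝ := ∑ i, z i ^ 2

/-- Group law of the H-type group determined by the matrices `U`. -/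
def gmul {n m : ℕ} (U : Fin m → Matrix (Fin (2*n)) (Fin (2*n)) ℝ) (ξ η : HG n m) : HG n m :=
  (ξ.1 + η.1, fun k => ξ.2 k + η.2 k + (1/2) * dotProduct ξ.1 ((U k).mulVec η.1))

/-- Group inverse. -/
def ginv {n m : ℕ} (ξ : HG n m) : HG n m := (-ξ.1, -ξ.2)

/-- Homogeneous norm `|(z,w)| = (|z|⁴/16 + |w|²)^{1/4}`. -/
def hnorm {n m : ℕ} (ξ : HG n m) : ℝ := ((zsq ξ.1)^2/16 + zsq ξ.2) ^ ((1:ℝ)/4)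

/-- Homogeneous dimension `Q = 2n + 2m`. -/
def Qh (n m : ℕ) : ℝ := 2*n + 2*m

/-- H-type conditions on the matrices `U^{(1)},…,U^{(m)}`. -/
def IsHType {n m : ℕ} (U : Fin m → Matrix (Fin (2*n)) (Fin (2*n)) ℝ) : Prop :=
  (∀ k, (U k)ᵀ = -(U k)) ∧ (∀ k, U k * (U k)ᵀ = 1) ∧
    (∀ j k, j ≠ k → U j * U k + U k * U j = 0)

/-- The constant `a_{n,m,s}` in the ground-state representation of the energy. -/
def aC (n m : ℕ) (s : ℝ) : ℝ :=
  2 ^ (s - (n:ℝ) - 2) * Real.pi ^ (-(n:ℝ) - ((m:ℝ)+1)/2) * s *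
    Gamma (((n:ℝ)+1+s)/2) * Gamma (((n:ℝ)+(m:ℝ)+s)/2) / Gamma (1-s)

/-- The sharp Sobolev constant `S_{n,m,s}`. -/
def SC (n m : ℕ) (s : ℝ) : ℝ :=
  4 ^ (s * (Qh n m + 2*(n:ℝ)) / Qh n m) * Real.pi ^ (s * (2*(n:ℝ)+(m:ℝ)) / Qh n m) *
    (Gamma (((n:ℝ)+1+s)/2) * Gamma (((n:ℝ)+(m:ℝ)+s)/2) /
      (Gamma (((n:ℝ)+1-s)/2) * Gamma (((n:ℝ)+(m:ℝ)-s)/2))) *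
    (Gamma ((n:ℝ)+(m:ℝ)/2) / Gamma (2*(n:ℝ)+(m:ℝ))) ^ (2*s / Qh n m)

/-- The Green's-function constant `c_{n,m,s}`. -/
def cC (n m : ℕ) (s : ℝ) : ℝ :=
  Gamma (((n:ℝ)+1-s)/2) * Gamma (((n:ℝ)+(m:ℝ)-s)/2) /
    (2 ^ ((n:ℝ)+1+s) * Real.pi ^ ((n:ℝ)+((m:ℝ)+1)/2) * Gamma s)

/-- The sharp Hardy constant `N_{n,m,s}`. -/
def NC (n m : ℕ) (s : ℝ) : ℝ :=
  4 ^ s * Gamma (((n:ℝ)+1+s)/2) * Gamma (((n:ℝ)+(m:ℝ)+s)/2) /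
    (Gamma (((n:ℝ)+1-s)/2) * Gamma (((n:ℝ)+(m:ℝ)-s)/2))

/-- The energy `E_s[f]` (ground-state representation of `∫ f 𝓛_s f`). -/
def Es {n m : ℕ} (U : Fin m → Matrix (Fin (2*n)) (Fin (2*n)) ℝ) (s : ℝ)
    (f : HG n m → ℝ) : ℝ :=
  aC n m s * ∫ ξ : HG n m, ∫ η : HG n m,
    |f ξ - f η| ^ 2 * hnorm (gmul U (ginv η) ξ) ^ (-(Qh n m + 2*s))

/-- `B(z,w) = (1+|z|²/4)² + |w|²`. -/
def Bfun {n m : ℕ} (ξ : HG n m) : ℝ := (1 + zsq ξ.1/4)^2 + zsq ξ.2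

/-- The extremal function `U(z,w) = B(z,w)^{-(Q-2s)/4}`. -/
def Ufun {n m : ℕ} (s : ℝ) (ξ : HG n m) : ℝ := Bfun ξ ^ (-(Qh n m - 2*s)/4)

/-- The Jacobian of the Cayley transform `J(z,w) = B(z,w)^{-Q/2}`. -/
def Jc {n m : ℕ} (ξ : HG n m) : ℝ := Bfun ξ ^ (-(Qh n m)/2)

/-- The functions `ω_j`, `j = 1,…,2n+m+1`. -/
def omegaF {n m : ℕ} (U : Fin m → Matrix (Fin (2*n)) (Fin (2*n)) ℝ)
    (j : Fin (2*n + m + 1)) (ξ : HG n m) : ℝ :=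
  if h : (j : ℕ) < 2*n then
    ((1 + zsq ξ.1 / 4) * ξ.1 ⟨j, h⟩ + ∑ k, ξ.2 k * ((U k).mulVec ξ.1) ⟨j, h⟩) / Bfun ξ
  else if h2 : (j : ℕ) < 2*n + m then
    2 * ξ.2 ⟨(j : ℕ) - 2*n, by omega⟩ / Bfun ξ
  else
    (1 - (zsq ξ.1)^2/16 - zsq ξ.2) / Bfun ξ

/-- The function `ω₁`. -/
def omega1 {n m : ℕ} (hn : 0 < n) (U : Fin m → Matrix (Fin (2*n)) (Fin (2*n)) ℝ)
    (ξ : HG n m) : ℝ :=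
  ((1 + zsq ξ.1 / 4) * ξ.1 ⟨0, by omega⟩ + ∑ k, ξ.2 k * ((U k).mulVec ξ.1) ⟨0, by omega⟩) /
    Bfun ξ

/-! The first `2n` coordinates of `ω` form the vector `((1 + |z|²/4) z + M z) / B` with
`M = Σₖ wₖ U⁽ᵏ⁾`. The H-type relations make `M` skew-symmetric with `Mᵀ M = |w|² I`
(a Clifford relation), so `M z ⊥ z` and `|M z| = |w| |z|`; hence this block has squared length
`((1 + |z|²/4)² + |w|²) |z|² / B² = |z|² / B`, and the remaining identity
`B |z|² + 4 |w|² + (1 - |z|⁴/16 - |w|²)² = B²` is polynomial. -/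

theorem sum_smul_mul_self_of_anticommute {ι R A : Type*} [CommSemiring R] [Semiring A]
    [Algebra R A] (s : Finset ι) (a : ι → A) (c : A) (w : ι → R)
    (hsq : ∀ k, a k * a k = c) (hanti : ∀ k l, k ≠ l → a k * a l + a l * a k = 0) :
    (∑ k ∈ s, w k • a k) * (∑ k ∈ s, w k • a k) = (∑ k ∈ s, w k ^ 2) • c := by
  classical
  induction s using Finset.induction_on with
  | empty => simp
  | insert l s hl ih =>
    have hcross : (∑ k ∈ s, w k • a k) * a l + a l * (∑ k ∈ s, w k • a k) = 0 := by
      rw [Finset.sum_mul, Finset.mul_sum, ← Finset.sum_add_distrib]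
      refine Finset.sum_eq_zero fun k hk => ?_
      rw [smul_mul_assoc, mul_smul_comm, ← smul_add, hanti k l (ne_of_mem_of_not_mem hk hl),
        smul_zero]
    rw [Finset.sum_insert hl, Finset.sum_insert hl, add_smul, ← ih, ← hsq l]
    calc (w l • a l + ∑ k ∈ s, w k • a k) * (w l • a l + ∑ k ∈ s, w k • a k)
        = (w l ^ 2) • (a l * a l) + w l • ((∑ k ∈ s, w k • a k) * a l
            + a l * (∑ k ∈ s, w k • a k)) + (∑ k ∈ s, w k • a k) * (∑ k ∈ s, w k • a k) := by
          simp only [add_mul, mul_add, smul_mul_assoc, mul_smul_comm, smul_add, smul_smul, sq]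
          abel
      _ = _ := by rw [hcross, smul_zero, add_zero]

namespace Matrix

variable {ι : Type*} [Fintype ι]

theorem dotProduct_mulVec_self_eq_zero_of_transpose_eq_neg {M : Matrix ι ι ℝ} (hM : Mᵀ = -M)
    (z : ι → ℝ) : z ⬝ᵥ M *ᵥ z = 0 := by
  have h : z ⬝ᵥ M *ᵥ z = -(z ⬝ᵥ M *ᵥ z) :=
    calc z ⬝ᵥ M *ᵥ z = z ⬝ᵥ Mᵀ *ᵥ z := by rw [dotProduct_mulVec, mulVec_transpose, dotProduct_comm]
      _ = -(z ⬝ᵥ M *ᵥ z) := by rw [hM, neg_mulVec, dotProduct_neg]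
  linarith

theorem mulVec_dotProduct_mulVec_self {R : Type*} [CommSemiring R] (M : Matrix ι ι R)
    (z : ι → R) :
    M *ᵥ z ⬝ᵥ M *ᵥ z = z ⬝ᵥ (Mᵀ * M) *ᵥ z := by
  rw [← mulVec_mulVec, dotProduct_mulVec z, vecMul_transpose]

theorem add_mulVec_dotProduct_self [DecidableEq ι] {M : Matrix ι ι ℝ} {d : ℝ} (hskew : Mᵀ = -M)
    (hconf : Mᵀ * M = d • 1) (c : ℝ) (z : ι → ℝ) :
    (c • z + M *ᵥ z) ⬝ᵥ (c • z + M *ᵥ z) = (c ^ 2 + d) * (z ⬝ᵥ z) := by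
  have hperp := dotProduct_mulVec_self_eq_zero_of_transpose_eq_neg hskew z
  have hlen : M *ᵥ z ⬝ᵥ M *ᵥ z = d * (z ⬝ᵥ z) := by
    rw [mulVec_dotProduct_mulVec_self, hconf, smul_mulVec, one_mulVec, dotProduct_smul, smul_eq_mul]
  simp only [add_dotProduct, dotProduct_add, smul_dotProduct, dotProduct_smul, smul_eq_mul,
    hperp, hlen, dotProduct_comm (M *ᵥ z) z]
  ring

end Matrix

namespace IsHType

variable {n m : ℕ} {U : Fin m → Matrix (Fin (2*n)) (Fin (2*n)) ℝ}

theorem mul_self (hU : IsHType U) (k : Fin m) : U k * U k = -1 := by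
  rw [← neg_eq_iff_eq_neg, ← Matrix.mul_neg, ← hU.1 k, hU.2.1 k]

theorem transpose_sum_smul (hU : IsHType U) (w : Fin m → ℝ) :
    (∑ k, w k • U k)ᵀ = -∑ k, w k • U k := by
  simp only [Matrix.transpose_sum, Matrix.transpose_smul, hU.1, smul_neg, Finset.sum_neg_distrib]

theorem transpose_sum_smul_mul_self (hU : IsHType U) (w : Fin m → ℝ) :
    (∑ k, w k • U k)ᵀ * ∑ k, w k • U k = (w ⬝ᵥ w) • 1 := by
  rw [hU.transpose_sum_smul, neg_mul,
    sum_smul_mul_self_of_anticommute _ U (-1) w hU.mul_self hU.2.2, smul_neg, neg_neg]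
  simp [dotProduct, sq]

end IsHType

section omega

variable {n m : ℕ}

theorem zsq_eq_dotProduct {k : ℕ} (z : Fin k → ℝ) : zsq z = z ⬝ᵥ z := by
  simp [zsq, dotProduct, sq]

theorem zsq_nonneg {k : ℕ} (z : Fin k → ℝ) : 0 ≤ zsq z :=
  Finset.sum_nonneg fun _ _ => sq_nonneg _

theorem Bfun_pos (ξ : HG n m) : 0 < Bfun ξ := by
  have := zsq_nonneg ξ.1
  have := zsq_nonneg ξ.2
  unfold Bfun
  positivity

theorem Bfun_sq (ξ : HG n m) :
    Bfun ξ ^ 2 = Bfun ξ * zsq ξ.1 + 4 * zsq ξ.2 + (1 - zsq ξ.1 ^ 2 / 16 - zsq ξ.2) ^ 2 := by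
  unfold Bfun
  ring

variable (U : Fin m → Matrix (Fin (2*n)) (Fin (2*n)) ℝ) (ξ : HG n m)

theorem omegaF_castSucc_castAdd (i : Fin (2*n)) :
    omegaF U (Fin.castAdd m i).castSucc ξ
      = ((1 + zsq ξ.1 / 4) • ξ.1 + (∑ k, ξ.2 k • U k) *ᵥ ξ.1) i / Bfun ξ := by
  simp [omegaF, Matrix.sum_mulVec, Matrix.smul_mulVec]

theorem omegaF_castSucc_natAdd (r : Fin m) :
    omegaF U (Fin.natAdd (2*n) r).castSucc ξ = 2 * ξ.2 r / Bfun ξ := by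
  simp [omegaF]

theorem omegaF_last :
    omegaF U (Fin.last _) ξ = (1 - zsq ξ.1 ^ 2 / 16 - zsq ξ.2) / Bfun ξ := by
  simp [omegaF]

end omega

theorem sum_omega_sq_eq_one_general (n m : ℕ)
    (U : Fin m → Matrix (Fin (2*n)) (Fin (2*n)) ℝ) (hU : IsHType U)
    (ξ : HG n m) :
    ∑ j : Fin (2*n + m + 1), omegaF U j ξ ^ 2 = 1 := by
  have hfirst : ∑ i, ((1 + zsq ξ.1 / 4) • ξ.1 + (∑ k, ξ.2 k • U k) *ᵥ ξ.1) i ^ 2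
      = Bfun ξ * zsq ξ.1 := by
    rw [← zsq, zsq_eq_dotProduct, Matrix.add_mulVec_dotProduct_self (hU.transpose_sum_smul _)
      (hU.transpose_sum_smul_mul_self _), Bfun, zsq_eq_dotProduct, zsq_eq_dotProduct]
  have hmiddle : ∑ r, (2 * ξ.2 r) ^ 2 = 4 * zsq ξ.2 := by
    simp only [mul_pow, ← Finset.mul_sum, zsq]
    norm_num
  rw [Fin.sum_univ_castSucc, Fin.sum_univ_add]
  simp only [omegaF_castSucc_castAdd, omegaF_castSucc_natAdd, omegaF_last, div_pow,
    ← Finset.sum_div, hfirst, hmiddle, ← add_div, ← Bfun_sq]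
  exact div_self (pow_pos (Bfun_pos ξ) 2).ne'

/-- `Σ_{j=1}^{2n+m+1} ω_j² = 1`. -/
theorem sum_omega_sq_eq_one (n m : ℕ) (hn : 0 < n) (hm : 0 < m)
    (U : Fin m → Matrix (Fin (2*n)) (Fin (2*n)) ℝ) (hU : IsHType U)
    (ξ : HG n m) :
    ∑ j : Fin (2*n + m + 1), omegaF U j ξ ^ 2 = 1 :=
  sum_omega_sq_eq_one_general n m U hU ξ
end
end

section
/- For positive integers n, m and Q = 2n+2m, one has ∫_{ℝ^{2n}×ℝ^m} [(1+|z|²/4)²+|w|²]^{-Q/2} dz dw = 4^n π^{n+m/2} Γ(n+m/2)/Γ(2n+m). (The total mass of the Jacobian of the Cayley transform, equal to the volume of the sphere S^{2n+m} expressed through the Cayley transform.) -/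
open MeasureTheory Real Matrix

noncomputable section

/-!
Integrate out `w` first: for `R > 0` one has
`∫_{ℝ^d} (R² + |w|²)^{-p} dw = R^{d-2p} π^{d/2} Γ(p - d/2) / Γ(p)`,
which polar coordinates and the substitution `x = y²/(1+y²)` reduce to Euler's beta integral.
With `R = 1 + |z|²/4` this leaves `(1 + |z|²/4)^{-(2n+m)}`, an integral of the same type
over `ℝ^{2n}`, and the two Gamma quotients telescope to `4^n` times
`∫_{ℝ^{2n+m}} (1 + |x|²)^{-(2n+m)}`.
-/

open Set Module

theorem integral_Ioo_rpow_mul_one_sub_rpow {a b : ℝ} (ha : 0 < a) (hb : 0 < b) :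
    ∫ x in Ioo (0:ℝ) 1, x ^ (a - 1) * (1 - x) ^ (b - 1)
      = Gamma a * Gamma b / Gamma (a + b) := by
  have hcast : ((∫ x in (0:ℝ)..1, x ^ (a - 1) * (1 - x) ^ (b - 1) : ℝ) : ℂ)
      = Complex.betaIntegral a b := by
    rw [Complex.betaIntegral, ← intervalIntegral.integral_ofReal]
    refine intervalIntegral.integral_congr fun x hx => ?_
    rw [uIcc_of_le zero_le_one] at hx
    push_cast [Complex.ofReal_cpow hx.1, Complex.ofReal_cpow (sub_nonneg.2 hx.2)]
    rfl
  have hΓ := Complex.Gamma_mul_Gamma_eq_betaIntegral (s := a) (t := b)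
    (by simpa using ha) (by simpa using hb)
  rw [← hcast, ← Complex.ofReal_add, Complex.Gamma_ofReal, Complex.Gamma_ofReal,
    Complex.Gamma_ofReal] at hΓ
  norm_cast at hΓ
  rw [← integral_Ioc_eq_integral_Ioo, ← intervalIntegral.integral_of_le zero_le_one,
    eq_div_iff (Gamma_pos_of_pos (add_pos ha hb)).ne', hΓ, mul_comm]

theorem integral_Ioi_rpow_mul_one_add_sq_rpow_neg {c p : ℝ} (hc : 0 < c) (hp : c / 2 < p) :
    ∫ y in Ioi (0:ℝ), y ^ (c - 1) * (1 + y ^ 2) ^ (-p)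
      = Gamma (c / 2) * Gamma (p - c / 2) / (2 * Gamma p) := by
  set φ : ℝ → ℝ := fun y => y ^ 2 / (1 + y ^ 2)
  have himage : φ '' Ioi 0 = Ioo 0 1 := by
    ext x
    constructor
    · rintro ⟨y, hy, rfl⟩
      have hy : 0 < y := hy
      exact ⟨by positivity, (div_lt_one (by positivity)).2 (by linarith)⟩
    · rintro ⟨hx0, hx1⟩
      refine ⟨√(x / (1 - x)), Real.sqrt_pos.2 (div_pos hx0 (by linarith)), ?_⟩
      have h1x : 1 - x ≠ 0 := by linarith
      simp only [φ]
      rw [Real.sq_sqrt (div_pos hx0 (by linarith)).le]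
      field_simp
      ring
  have hderiv : ∀ y ∈ Ioi (0:ℝ), HasDerivWithinAt φ (2 * y / (1 + y ^ 2) ^ 2) (Ioi 0) y := by
    intro y _
    have h : HasDerivAt φ _ y :=
      (hasDerivAt_pow 2 y).div ((hasDerivAt_pow 2 y).const_add 1) (by positivity)
    exact h.hasDerivWithinAt.congr_deriv (by norm_num; ring)
  have hinj : InjOn φ (Ioi 0) := by
    intro y (hy : 0 < y) z (hz : 0 < z) hyz
    rw [div_eq_div_iff (by positivity) (by positivity)] at hyz
    nlinarith
  have hsub := integral_image_eq_integral_abs_deriv_smul measurableSet_Ioi hderiv hinj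
    (fun x => x ^ (c / 2 - 1) * (1 - x) ^ (p - c / 2 - 1))
  rw [himage, integral_Ioo_rpow_mul_one_sub_rpow (by linarith) (by linarith),
    add_sub_cancel] at hsub
  have hpointwise : ∀ y ∈ Ioi (0:ℝ), |2 * y / (1 + y ^ 2) ^ 2| •
      (φ y ^ (c / 2 - 1) * (1 - φ y) ^ (p - c / 2 - 1))
        = 2 * (y ^ (c - 1) * (1 + y ^ 2) ^ (-p)) := by
    intro y (hy : 0 < y)
    have hs : 0 < 1 + y ^ 2 := by positivity
    have h1φ : 1 - φ y = (1 + y ^ 2)⁻¹ := by simp only [φ]; field_simp; ring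
    have hy2 : (y ^ 2) ^ (c / 2 - 1) = y ^ (c - 2) := by
      rw [← Real.rpow_natCast, ← Real.rpow_mul hy.le]; ring_nf
    have hyc : y ^ (c - 1) = y ^ (c - 2) * y := by
      rw [← Real.rpow_add_one hy.ne']; ring_nf
    have hsp : (1 + y ^ 2) ^ (-p)
        = ((1 + y ^ 2) ^ 2 * (1 + y ^ 2) ^ (c / 2 - 1) * (1 + y ^ 2) ^ (p - c / 2 - 1))⁻¹ := by
      rw [Real.rpow_neg hs.le, ← Real.rpow_two (1 + y ^ 2), ← Real.rpow_add hs,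
        ← Real.rpow_add hs]
      ring_nf
    rw [smul_eq_mul, abs_of_pos (by positivity), h1φ, Real.inv_rpow hs.le,
      Real.div_rpow (by positivity) hs.le, hy2, hyc, hsp]
    field_simp
  calc _ = (∫ y in Ioi (0:ℝ), 2 * (y ^ (c - 1) * (1 + y ^ 2) ^ (-p))) / 2 := by
        rw [integral_const_mul]; ring
    _ = _ := by
      rw [← setIntegral_congr_fun measurableSet_Ioi hpointwise, ← hsub, div_div, mul_comm 2]

/-- The value of `∫_{ℝ^d} (1 + |x|²)^{-p} dx`. -/
def japaneseBracketMass (d : ℕ) (p : ℝ) : ℝ :=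
  π ^ ((d:ℝ) / 2) * Gamma (p - d / 2) / Gamma p

theorem japaneseBracketMass_pos {d : ℕ} {p : ℝ} (hp : (d:ℝ) / 2 < p) :
    0 < japaneseBracketMass d p := by
  have hd : (0:ℝ) ≤ d / 2 := by positivity
  have := Gamma_pos_of_pos (sub_pos.2 hp)
  have := Gamma_pos_of_pos (show 0 < p by linarith)
  unfold japaneseBracketMass
  positivity

theorem japaneseBracketMass_mul_japaneseBracketMass (d e : ℕ) {p : ℝ} (hp : (d:ℝ) / 2 < p) :
    japaneseBracketMass d p * japaneseBracketMass e (p - d / 2)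
      = japaneseBracketMass (d + e) p := by
  have hΓ := (Gamma_pos_of_pos (sub_pos.2 hp)).ne'
  unfold japaneseBracketMass
  rw [Nat.cast_add, add_div, Real.rpow_add pi_pos, sub_sub, mul_div_assoc, mul_div_assoc,
    mul_div_assoc, mul_mul_mul_comm, div_mul_div_comm, mul_comm (Gamma (p - d / 2)),
    mul_div_mul_right _ _ hΓ]

section InnerProductSpace

variable {E F : Type*} [NormedAddCommGroup E] [InnerProductSpace ℝ E] [FiniteDimensional ℝ E]
  [MeasurableSpace E] [BorelSpace E] [Nontrivial E]
  [NormedAddCommGroup F] [InnerProductSpace ℝ F] [FiniteDimensional ℝ F]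
  [MeasurableSpace F] [BorelSpace F] [Nontrivial F]

theorem integral_one_add_norm_sq_rpow_neg {p : ℝ} (hp : (finrank ℝ E : ℝ) / 2 < p) :
    ∫ x : E, (1 + ‖x‖ ^ 2) ^ (-p) = japaneseBracketMass (finrank ℝ E) p := by
  rw [integral_fun_norm_addHaar volume (fun r => (1 + r ^ 2) ^ (-p))]
  have hball : volume.real (Metric.ball (0:E) 1)
      = π ^ ((finrank ℝ E : ℝ) / 2) / Gamma (finrank ℝ E / 2 + 1) := by
    rw [measureReal_def, InnerProductSpace.volume_ball, ENNReal.ofReal_one, one_pow, one_mul,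
      ENNReal.toReal_ofReal (by positivity), Real.sqrt_eq_rpow, ← Real.rpow_natCast,
      ← Real.rpow_mul pi_pos.le]
    ring_nf
  set d := finrank ℝ E
  have hd : 0 < d := finrank_pos
  have hradial : ∫ y in Ioi (0:ℝ), y ^ (d - 1) • (1 + y ^ 2) ^ (-p)
      = Gamma (d / 2) * Gamma (p - d / 2) / (2 * Gamma p) := by
    rw [← integral_Ioi_rpow_mul_one_add_sq_rpow_neg (by positivity) hp]
    refine setIntegral_congr_fun measurableSet_Ioi fun y _ => ?_
    rw [smul_eq_mul, ← Real.rpow_natCast, Nat.cast_sub hd, Nat.cast_one]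
  rw [hball, hradial, Gamma_add_one (by positivity), nsmul_eq_mul, smul_eq_mul,
    japaneseBracketMass]
  have := (Gamma_pos_of_pos (show (0:ℝ) < d / 2 by positivity)).ne'
  field_simp

theorem integral_one_add_norm_sq_div_sq_rpow_neg {p R : ℝ} (hp : (finrank ℝ E : ℝ) / 2 < p)
    (hR : 0 < R) :
    ∫ x : E, (1 + ‖x‖ ^ 2 / R ^ 2) ^ (-p)
      = R ^ finrank ℝ E * japaneseBracketMass (finrank ℝ E) p := by
  have hscale : ∀ x : E, ‖x‖ ^ 2 / R ^ 2 = ‖R⁻¹ • x‖ ^ 2 := fun x => by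
    rw [norm_smul, norm_inv, Real.norm_of_nonneg hR.le]; field_simp
  simp_rw [hscale]
  rw [Measure.integral_comp_inv_smul_of_nonneg volume (fun x : E => (1 + ‖x‖ ^ 2) ^ (-p)) hR.le,
    integral_one_add_norm_sq_rpow_neg hp, smul_eq_mul]

theorem integral_sq_add_norm_sq_rpow_neg {p R : ℝ} (hp : (finrank ℝ E : ℝ) / 2 < p)
    (hR : 0 < R) :
    ∫ x : E, (R ^ 2 + ‖x‖ ^ 2) ^ (-p)
      = R ^ ((finrank ℝ E : ℝ) - 2 * p) * japaneseBracketMass (finrank ℝ E) p := by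
  have hfactor : ∀ x : E,
      (R ^ 2 + ‖x‖ ^ 2) ^ (-p) = R ^ (-2 * p) * (1 + ‖x‖ ^ 2 / R ^ 2) ^ (-p) := fun x => by
    rw [neg_mul, Real.rpow_neg hR.le, Real.rpow_mul hR.le, Real.rpow_two,
      ← Real.rpow_neg (by positivity), ← Real.mul_rpow (by positivity) (by positivity)]
    congr 1
    field_simp
  simp_rw [hfactor]
  rw [integral_const_mul, integral_one_add_norm_sq_div_sq_rpow_neg hp hR, ← mul_assoc,
    ← Real.rpow_natCast, ← Real.rpow_add hR]
  ring_nf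

theorem integral_prod_one_add_norm_sq_div_four_sq_add_norm_sq_rpow_neg {p : ℝ}
    (hpF : (finrank ℝ F : ℝ) / 2 < p)
    (hpE : (finrank ℝ E : ℝ) / 2 < 2 * p - finrank ℝ F) :
    ∫ ξ : E × F, ((1 + ‖ξ.1‖ ^ 2 / 4) ^ 2 + ‖ξ.2‖ ^ 2) ^ (-p)
      = 2 ^ finrank ℝ E * japaneseBracketMass (finrank ℝ E) (2 * p - finrank ℝ F)
          * japaneseBracketMass (finrank ℝ F) p := by
  set f : E × F → ℝ := fun ξ => ((1 + ‖ξ.1‖ ^ 2 / 4) ^ 2 + ‖ξ.2‖ ^ 2) ^ (-p)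
  have hinner : ∀ z : E, ∫ w : F, f (z, w) =
      (1 + ‖z‖ ^ 2 / 4) ^ (-(2 * p - finrank ℝ F)) * japaneseBracketMass (finrank ℝ F) p :=
    fun z => by simp only [f]; rw [integral_sq_add_norm_sq_rpow_neg hpF (by positivity), neg_sub]
  have houter : ∫ z : E, (1 + ‖z‖ ^ 2 / 4) ^ (-(2 * p - finrank ℝ F))
      = 2 ^ finrank ℝ E * japaneseBracketMass (finrank ℝ E) (2 * p - finrank ℝ F) := by
    rw [show (4:ℝ) = 2 ^ 2 by norm_num, integral_one_add_norm_sq_div_sq_rpow_neg hpE two_pos]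
  have hf_nonneg : ∀ ξ, 0 ≤ f ξ := fun ξ => by positivity
  have hf_meas : AEStronglyMeasurable f (volume.prod volume) := by
    refine (Continuous.rpow_const (by fun_prop) fun ξ => Or.inl ?_).aestronglyMeasurable
    positivity
  have hf_int : Integrable f (volume.prod volume) := by
    refine (integrable_prod_iff hf_meas).2 ⟨Filter.Eventually.of_forall fun z => ?_, ?_⟩
    · refine Integrable.of_integral_ne_zero ?_
      rw [hinner]
      exact (mul_pos (by positivity) (japaneseBracketMass_pos hpF)).ne'
    · simp_rw [Real.norm_of_nonneg (hf_nonneg _), hinner]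
      refine (Integrable.of_integral_ne_zero ?_).mul_const _
      rw [houter]
      exact (mul_pos (by positivity) (japaneseBracketMass_pos hpE)).ne'
  rw [Measure.volume_eq_prod, integral_prod f hf_int]
  simp_rw [hinner]
  rw [integral_mul_const, houter]

end InnerProductSpace

theorem zsq_ofLp {k : ℕ} (x : EuclideanSpace ℝ (Fin k)) :
    zsq (WithLp.ofLp x) = ‖x‖ ^ 2 := by
  simp [zsq, EuclideanSpace.norm_sq_eq]

theorem integral_comp_zsq_prod {k l : ℕ} (g : ℝ → ℝ → ℝ) :
    ∫ ξ : (Fin k → ℝ) × (Fin l → ℝ), g (zsq ξ.1) (zsq ξ.2)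
      = ∫ ξ : EuclideanSpace ℝ (Fin k) × EuclideanSpace ℝ (Fin l),
          g (‖ξ.1‖ ^ 2) (‖ξ.2‖ ^ 2) := by
  let e := (MeasurableEquiv.toLp 2 (Fin k → ℝ)).symm.prodCongr
    (MeasurableEquiv.toLp 2 (Fin l → ℝ)).symm
  have he : MeasurePreserving e :=
    (PiLp.volume_preserving_ofLp (Fin k)).prod (PiLp.volume_preserving_ofLp (Fin l))
  rw [← he.integral_comp']
  exact integral_congr_ae (Filter.Eventually.of_forall fun ξ =>
    congrArg₂ g (zsq_ofLp ξ.1) (zsq_ofLp ξ.2))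

/-- the total mass of the Jacobian of the Cayley transform. -/
theorem cayley_jacobian_mass (n m : ℕ) (hn : 0 < n) (hm : 0 < m) :
    ∫ ξ : HG n m, ((1 + zsq ξ.1/4)^2 + zsq ξ.2) ^ (-(Qh n m)/2)
      = 4 ^ n * Real.pi ^ ((n:ℝ) + (m:ℝ)/2) * Gamma ((n:ℝ) + (m:ℝ)/2) /
          Gamma (2*(n:ℝ) + (m:ℝ)) := by
  have : Nonempty (Fin (2 * n)) := ⟨⟨0, by omega⟩⟩
  have : Nonempty (Fin m) := ⟨⟨0, hm⟩⟩
  have hQ : -(Qh n m) / 2 = -((n:ℝ) + m) := by rw [Qh]; ring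
  have hn' : (0:ℝ) < n := by exact_mod_cast hn
  have hm' : (0:ℝ) < m := by exact_mod_cast hm
  have hmass := japaneseBracketMass_mul_japaneseBracketMass (2 * n) m (p := 2 * n + m)
    (by push_cast; linarith)
  rw [hQ, integral_comp_zsq_prod fun a b => ((1 + a / 4) ^ 2 + b) ^ (-((n:ℝ) + m)),
    integral_prod_one_add_norm_sq_div_four_sq_add_norm_sq_rpow_neg
      (by simp only [finrank_euclideanSpace_fin]; linarith)
      (by simp only [finrank_euclideanSpace_fin]; push_cast; linarith),
    finrank_euclideanSpace_fin, finrank_euclideanSpace_fin]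
  have houter_exp : 2 * ((n:ℝ) + m) - m = 2 * n + m := by ring
  have hinner_exp : (n:ℝ) + m = 2 * n + m - ((2 * n : ℕ) : ℝ) / 2 := by push_cast; ring
  have hhalf : (2 * n + m : ℝ) / 2 = n + m / 2 := by ring
  rw [houter_exp, hinner_exp, mul_assoc, hmass, japaneseBracketMass, pow_mul]
  push_cast
  rw [hhalf, show (2 * n + m : ℝ) - (n + m / 2) = n + m / 2 by ring]
  norm_num
  ring
end
end
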